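/- arXiv:1603.06725 — 3 statements merged into one kernel-verified Lean document; each statement's English description precedes it below -/
import Mathlib

section
/- Let k ≥ 1 and for n ≥ 0 define J_n = ∫_{[0,1]^k} (x_1⋯x_k)(x_1⋯x_k + 1)⋯(x_1⋯x_k + n − 1) dx_1⋯dx_k (with J_0 = 1). Then for all n ≥ 1, J_n^2 ≤ J_{n−1} J_{n+1}; that is, the sequence {(−1)^n ĉ_n^{(k)}}_{n≥0} of signed poly-Cauchy numbers of the second kind is log-convex. -/
open MeasureTheory

/-- Integral of `f (x₁ ⋯ x_k)` over the unit cube `[0,1]^k`. -/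
noncomputable def cubeInt (k : ℕ) (f : ℝ → ℝ) : ℝ :=
  ∫ x : Fin k → ℝ in Set.univ.pi fun _ => Set.Icc (0:ℝ) 1, f (∏ i, x i)

/-!
Write `p = x₁ ⋯ xₖ` and `Fₙ(p) = p (p + 1) ⋯ (p + n - 1)`. For `p ≥ 0` one has pointwise
`Fₙ(p)² = Fₙ₋₁(p)² (p + n - 1)² ≤ Fₙ₋₁(p)² (p + n - 1)(p + n) = Fₙ₋₁(p) Fₙ₊₁(p)`,
and the Cauchy–Schwarz inequality turns a pointwise bound `f² ≤ g h` into
`(∫ f)² ≤ (∫ g)(∫ h)`.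
-/

section CauchySchwarz

variable {α : Type*} [MeasurableSpace α] {μ : Measure α}

theorem sq_integral_le_integral_mul_integral {f g h : α → ℝ}
    (hg : Integrable g μ) (hh : Integrable h μ) (hg₀ : 0 ≤ᵐ[μ] g) (hh₀ : 0 ≤ᵐ[μ] h)
    (hfgh : ∀ᵐ x ∂μ, f x ^ 2 ≤ g x * h x) :
    (∫ x, f x ∂μ) ^ 2 ≤ (∫ x, g x ∂μ) * ∫ x, h x ∂μ := by
  have memLp_sqrt {u : α → ℝ} (hu : Integrable u μ) (hu₀ : 0 ≤ᵐ[μ] u) :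
      MemLp (fun x => √(u x)) 2 μ := by
    rw [memLp_two_iff_integrable_sq
      (Real.continuous_sqrt.comp_aestronglyMeasurable hu.aestronglyMeasurable)]
    refine hu.congr ?_
    filter_upwards [hu₀] with x hx
    exact (Real.sq_sqrt hx).symm
  have integral_sqrt_rpow {u : α → ℝ} (hu₀ : 0 ≤ᵐ[μ] u) :
      ∫ x, √(u x) ^ (2 : ℝ) ∂μ = ∫ x, u x ∂μ := by
    refine integral_congr_ae ?_
    filter_upwards [hu₀] with x hx
    rw [Real.rpow_two, Real.sq_sqrt hx]
  have hHolder := integral_mul_le_Lp_mul_Lq_of_nonneg Real.HolderConjugate.two_two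
    (.of_forall fun x => Real.sqrt_nonneg (g x)) (.of_forall fun x => Real.sqrt_nonneg (h x))
    (by simpa using memLp_sqrt hg hg₀) (by simpa using memLp_sqrt hh hh₀)
  rw [integral_sqrt_rpow hg₀, integral_sqrt_rpow hh₀] at hHolder
  have habs : ∫ x, |f x| ∂μ ≤ ∫ x, √(g x) * √(h x) ∂μ := by
    refine integral_mono_of_nonneg (.of_forall fun x => abs_nonneg (f x))
      ((memLp_sqrt hg hg₀).integrable_mul (memLp_sqrt hh hh₀)) ?_
    filter_upwards [hg₀, hfgh] with x hx hx'
    rw [← Real.sqrt_mul hx, ← Real.sqrt_sq_eq_abs]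
    exact Real.sqrt_le_sqrt hx'
  calc (∫ x, f x ∂μ) ^ 2 = |∫ x, f x ∂μ| ^ 2 := (sq_abs _).symm
    _ ≤ ((∫ x, g x ∂μ) ^ (1 / 2 : ℝ) * (∫ x, h x ∂μ) ^ (1 / 2 : ℝ)) ^ 2 := by
      gcongr
      exact (abs_integral_le_integral_abs).trans (habs.trans hHolder)
    _ = (∫ x, g x ∂μ) * ∫ x, h x ∂μ := by
      rw [mul_pow, ← Real.sqrt_eq_rpow, ← Real.sqrt_eq_rpow,
        Real.sq_sqrt (integral_nonneg_of_ae hg₀), Real.sq_sqrt (integral_nonneg_of_ae hh₀)]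

end CauchySchwarz

theorem sq_prod_range_add_le_mul (m : ℕ) {p : ℝ} (hp : 0 ≤ p) :
    (∏ i ∈ Finset.range (m + 1), (p + i)) ^ 2 ≤
      (∏ i ∈ Finset.range m, (p + i)) * ∏ i ∈ Finset.range (m + 2), (p + i) := by
  have hF : 0 ≤ ∏ i ∈ Finset.range m, (p + i) := by positivity
  simp only [Finset.prod_range_succ, Nat.cast_add, Nat.cast_one]
  have hstep : (p + m) ^ 2 ≤ (p + m) * (p + (m + 1)) := by nlinarith
  nlinarith [mul_le_mul_of_nonneg_left hstep (mul_nonneg hF hF)]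

theorem prod_mem_Icc_of_mem_pi {k : ℕ} {x : Fin k → ℝ}
    (hx : x ∈ Set.univ.pi fun _ => Set.Icc (0 : ℝ) 1) : ∏ i, x i ∈ Set.Icc (0 : ℝ) 1 :=
  ⟨Finset.prod_nonneg fun i _ => (hx i trivial).1,
    Finset.prod_le_one (fun i _ => (hx i trivial).1) fun i _ => (hx i trivial).2⟩

theorem integrable_cubeInt_integrand (k : ℕ) {f : ℝ → ℝ} (hf : ContinuousOn f (Set.Icc 0 1)) :
    IntegrableOn (fun x : Fin k → ℝ => f (∏ i, x i))
      (Set.univ.pi fun _ => Set.Icc (0 : ℝ) 1) :=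
  (hf.comp (continuous_finsetProd _ fun i _ => continuous_apply i).continuousOn
    fun _ hx => prod_mem_Icc_of_mem_pi hx).integrableOn_compact
      (isCompact_univ_pi fun _ => isCompact_Icc)

theorem sq_cubeInt_le_mul (k : ℕ) {f g h : ℝ → ℝ}
    (hg : ContinuousOn g (Set.Icc 0 1)) (hh : ContinuousOn h (Set.Icc 0 1))
    (hg₀ : ∀ p ∈ Set.Icc (0 : ℝ) 1, 0 ≤ g p) (hh₀ : ∀ p ∈ Set.Icc (0 : ℝ) 1, 0 ≤ h p)
    (hfgh : ∀ p ∈ Set.Icc (0 : ℝ) 1, f p ^ 2 ≤ g p * h p) :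
    cubeInt k f ^ 2 ≤ cubeInt k g * cubeInt k h := by
  have hS : MeasurableSet (Set.univ.pi fun _ : Fin k => Set.Icc (0 : ℝ) 1) :=
    .univ_pi fun _ => measurableSet_Icc
  have onCube {P : ℝ → Prop} (hP : ∀ p ∈ Set.Icc (0 : ℝ) 1, P p) :
      ∀ᵐ x ∂(volume.restrict (Set.univ.pi fun _ : Fin k => Set.Icc (0 : ℝ) 1)),
        P (∏ i, x i) :=
    ae_restrict_of_forall_mem hS fun _ hx => hP _ (prod_mem_Icc_of_mem_pi hx)
  exact sq_integral_le_integral_mul_integral (integrable_cubeInt_integrand k hg)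
    (integrable_cubeInt_integrand k hh) (onCube hg₀) (onCube hh₀) (onCube hfgh)

theorem stmt_5_general (k : ℕ)
    (J : ℕ → ℝ)
    (hJ : ∀ n, J n = cubeInt k fun p => ∏ i ∈ Finset.range n, (p + i)) :
    ∀ n : ℕ, 1 ≤ n → J n ^ 2 ≤ J (n - 1) * J (n + 1) := by
  intro n hn
  obtain ⟨m, rfl⟩ := Nat.exists_eq_add_of_le' hn
  have hcont (j : ℕ) : ContinuousOn (fun p : ℝ => ∏ i ∈ Finset.range j, (p + i)) (Set.Icc 0 1) :=
    (continuous_finsetProd _ fun (i : ℕ) _ => continuous_add_const (i : ℝ)).continuousOn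
  have hnonneg (j : ℕ) (p : ℝ) (hp : p ∈ Set.Icc (0 : ℝ) 1) :
      0 ≤ ∏ i ∈ Finset.range j, (p + i) := by
    have := hp.1
    positivity
  rw [Nat.add_sub_cancel, hJ, hJ, hJ]
  exact sq_cubeInt_le_mul k (hcont m) (hcont (m + 2)) (hnonneg m) (hnonneg (m + 2))
    fun p hp => sq_prod_range_add_le_mul m hp.1

/-- For `J n = ∫_{[0,1]^k} p(p+1)⋯(p+n−1)` (with `p = x₁⋯x_k`, `J 0 = 1`),
the sequence `J` (which equals `(−1)^n ĉ_n^{(k)}`) is log-convex. -/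
theorem stmt_5 (k : ℕ) (hk : 0 < k)
    (J : ℕ → ℝ)
    (hJ : ∀ n, J n = cubeInt k fun p => ∏ i ∈ Finset.range n, (p + i)) :
    ∀ n : ℕ, 1 ≤ n → J n ^ 2 ≤ J (n - 1) * J (n + 1) :=
  stmt_5_general k J hJ
end

section
/- Let k ≥ 1 and let A = (0, α_1, α_2, …) be a sequence of nonnegative reals. Suppose there exists l ≥ 3 such that α_j ≥ 1 for 1 ≤ j ≤ l and α_j = 0 for j ≥ l+1. Then the sequence ω_{n,A}^{(k)} = ∫_{[0,1]^k} (x_1⋯x_k)(x_1⋯x_k + α_1)⋯(x_1⋯x_k + α_{n−1}) dx_1⋯dx_k (n ≥ 1) is unimodal with its peak at n = l+1: ω_{n,A}^{(k)} ≤ ω_{n+1,A}^{(k)} for 1 ≤ n ≤ l, and ω_{n,A}^{(k)} ≥ ω_{n+1,A}^{(k)} for n ≥ l+1. -/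
open MeasureTheory

theorem cubeInt_mono {k : ℕ} {f g : ℝ → ℝ} (hf : Continuous f) (hg : Continuous g)
    (h : ∀ p ∈ Set.Icc (0:ℝ) 1, f p ≤ g p) : cubeInt k f ≤ cubeInt k g := by
  have hcube : IsCompact (Set.univ.pi fun _ : Fin k => Set.Icc (0:ℝ) 1) :=
    isCompact_univ_pi fun _ => isCompact_Icc
  have hprod : Continuous fun x : Fin k → ℝ => ∏ i, x i := by fun_prop
  refine setIntegral_mono_on ((hf.comp hprod).continuousOn.integrableOn_compact hcube)
    ((hg.comp hprod).continuousOn.integrableOn_compact hcube)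
    (MeasurableSet.univ_pi fun _ => measurableSet_Icc) fun x hx => h _ ?_
  have hx' : ∀ i, x i ∈ Set.Icc (0:ℝ) 1 := fun i => hx i (Set.mem_univ i)
  exact ⟨Finset.prod_nonneg fun i _ => (hx' i).1,
    Finset.prod_le_one (fun i _ => (hx' i).1) fun i _ => (hx' i).2⟩

def genPochhammer (α : ℕ → ℝ) (n : ℕ) (p : ℝ) : ℝ :=
  p * ∏ i ∈ Finset.range (n - 1), (p + α (i + 1))

namespace genPochhammer

variable {α : ℕ → ℝ} {n : ℕ}

theorem continuous (α : ℕ → ℝ) (n : ℕ) : Continuous (genPochhammer α n) := by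
  unfold genPochhammer
  fun_prop

theorem succ (hn : 1 ≤ n) (p : ℝ) :
    genPochhammer α (n + 1) p = genPochhammer α n p * (p + α n) := by
  obtain ⟨m, rfl⟩ := Nat.exists_eq_add_of_le' hn
  simp only [genPochhammer, Nat.add_sub_cancel, Finset.prod_range_succ]
  ring

theorem nonneg (hα : ∀ j, 1 ≤ j → 0 ≤ α j) {p : ℝ} (hp : 0 ≤ p) :
    0 ≤ genPochhammer α n p :=
  mul_nonneg hp (Finset.prod_nonneg fun i _ => add_nonneg hp (hα _ i.succ_pos))

end genPochhammer

section

variable {α : ℕ → ℝ} {n : ℕ}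

theorem cubeInt_genPochhammer_le_succ (k : ℕ) (hα : ∀ j, 1 ≤ j → 0 ≤ α j) (hn : 1 ≤ n)
    (hαn : 1 ≤ α n) :
    cubeInt k (genPochhammer α n) ≤ cubeInt k (genPochhammer α (n + 1)) := by
  refine cubeInt_mono (genPochhammer.continuous α n) (genPochhammer.continuous α _)
    fun p hp => ?_
  rw [genPochhammer.succ hn]
  exact le_mul_of_one_le_right (genPochhammer.nonneg hα hp.1) (by linarith [hp.1])

theorem cubeInt_genPochhammer_succ_le (k : ℕ) (hα : ∀ j, 1 ≤ j → 0 ≤ α j) (hn : 1 ≤ n)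
    (hαn : α n = 0) :
    cubeInt k (genPochhammer α (n + 1)) ≤ cubeInt k (genPochhammer α n) := by
  refine cubeInt_mono (genPochhammer.continuous α _) (genPochhammer.continuous α n)
    fun p hp => ?_
  rw [genPochhammer.succ hn, hαn, add_zero]
  exact mul_le_of_le_one_right (genPochhammer.nonneg hα hp.1) hp.2

end

theorem stmt_10_general (k : ℕ) (α : ℕ → ℝ)
    (l : ℕ)
    (h1 : ∀ j : ℕ, 1 ≤ j → j ≤ l → 1 ≤ α j)
    (h0 : ∀ j : ℕ, l + 1 ≤ j → α j = 0)
    (ω : ℕ → ℝ)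
    (hω : ∀ n, ω n = cubeInt k fun p => p * ∏ i ∈ Finset.range (n - 1), (p + α (i + 1))) :
    (∀ n : ℕ, 1 ≤ n → n ≤ l → ω n ≤ ω (n + 1)) ∧
      (∀ n : ℕ, l + 1 ≤ n → ω (n + 1) ≤ ω n) := by
  have hω' : ∀ n, ω n = cubeInt k (genPochhammer α n) := hω
  have hα : ∀ j, 1 ≤ j → 0 ≤ α j := fun j hj => by
    rcases le_or_gt j l with hjl | hlj
    · linarith [h1 j hj hjl]
    · exact (h0 j hlj).ge
  refine ⟨fun n hn hnl => ?_, fun n hn => ?_⟩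
  · rw [hω', hω']
    exact cubeInt_genPochhammer_le_succ k hα hn (h1 n hn hnl)
  · rw [hω', hω']
    exact cubeInt_genPochhammer_succ_le k hα (by omega) (h0 n hn)

/-- If `α j ≥ 1` for `1 ≤ j ≤ l` and `α j = 0` for `j ≥ l + 1` (with `l ≥ 3`,
`α 0 = 0`, all `α j ≥ 0`), then `ω n = ∫_{[0,1]^k} p(p+α₁)⋯(p+α_{n−1})` is
unimodal with peak at `l + 1`. -/
theorem stmt_10 (k : ℕ) (hk : 0 < k) (α : ℕ → ℝ) (hα0 : α 0 = 0)
    (hnn : ∀ j, 0 ≤ α j) (l : ℕ) (hl : 3 ≤ l)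
    (h1 : ∀ j : ℕ, 1 ≤ j → j ≤ l → 1 ≤ α j)
    (h0 : ∀ j : ℕ, l + 1 ≤ j → α j = 0)
    (ω : ℕ → ℝ)
    (hω : ∀ n, ω n = cubeInt k fun p => p * ∏ i ∈ Finset.range (n - 1), (p + α (i + 1))) :
    (∀ n : ℕ, 1 ≤ n → n ≤ l → ω n ≤ ω (n + 1)) ∧
      (∀ n : ℕ, l + 1 ≤ n → ω (n + 1) ≤ ω n) :=
  stmt_10_general k α l h1 h0 ω hω
end

section
/- Let A = (α_0, α_1, …, α_{n−1}) be reals and S_1(n,m,A) be defined by Π_{i=0}^{n−1}(t−α_i) = Σ_{m=0}^n S_1(n,m,A) t^m. Then for every positive integer k, the multiparameter-poly-Cauchy number of the second kind satisfies ĉ_{n,A}^{(k)} = ∫_{[0,1]^k} Π_{i=0}^{n−1}(−x_1⋯x_k − α_i) dx_1⋯dx_k = Σ_{m=0}^n (−1)^m S_1(n,m,A)/(m+1)^k. -/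
/-! Substituting `t = -p` in the defining identity of `S` makes the integrand a polynomial in
`p = x₁ ⋯ x_k`; by Fubini the cube integral of `p ^ m` is `(∫₀¹ t ^ m dt) ^ k = 1 / (m + 1) ^ k`. -/

open MeasureTheory

theorem setIntegral_univ_pi_prod_eq_pow {ι E : Type*} [Fintype ι] [MeasurableSpace E]
    {μ : Measure E} [SigmaFinite μ] (s : Set E) (f : E → ℝ) :
    ∫ x in Set.univ.pi (fun _ : ι => s), ∏ i, f (x i) ∂Measure.pi (fun _ => μ) =
      (∫ t in s, f t ∂μ) ^ Fintype.card ι := by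
  rw [Measure.restrict_pi_pi]
  exact integral_fintype_prod_eq_pow f

theorem cubeInt_pow (k m : ℕ) : cubeInt k (fun p => p ^ m) = 1 / ((m : ℝ) + 1) ^ k := by
  simp_rw [cubeInt, ← Finset.prod_pow]
  rw [volume_pi, setIntegral_univ_pi_prod_eq_pow _ (· ^ m), Fintype.card_fin,
    integral_Icc_eq_integral_Ioc, ← intervalIntegral.integral_of_le zero_le_one, integral_pow]
  simp

theorem integrableOn_cube_comp_prod {k : ℕ} {f : ℝ → ℝ} (hf : Continuous f) :
    IntegrableOn (fun x : Fin k → ℝ => f (∏ i, x i)) (Set.univ.pi fun _ => Set.Icc 0 1) :=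
  (hf.comp (continuous_finsetProd _ fun i _ => continuous_apply i)).continuousOn
    |>.integrableOn_compact (isCompact_univ_pi fun _ => isCompact_Icc)

theorem cubeInt_sum_mul_pow (k : ℕ) (s : Finset ℕ) (c : ℕ → ℝ) :
    cubeInt k (fun p => ∑ m ∈ s, c m * p ^ m) = ∑ m ∈ s, c m / ((m : ℝ) + 1) ^ k := by
  rw [cubeInt, integral_finsetSum _ fun m _ =>
    integrableOn_cube_comp_prod (f := fun p => c m * p ^ m) (by fun_prop)]
  refine Finset.sum_congr rfl fun m _ => ?_
  rw [integral_const_mul, ← mul_one_div, ← cubeInt_pow]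
  rfl

theorem stmt_16_general (k : ℕ) (n : ℕ) (α : ℕ → ℝ) (S : ℕ → ℝ)
    (hS : ∀ t : ℝ,
      ∏ i ∈ Finset.range n, (t - α i) = ∑ m ∈ Finset.range (n + 1), S m * t ^ m) :
    cubeInt k (fun p => ∏ i ∈ Finset.range n, (-p - α i)) =
      ∑ m ∈ Finset.range (n + 1), (-1 : ℝ) ^ m * S m / ((m : ℝ) + 1) ^ k := by
  have expand : (fun p => ∏ i ∈ Finset.range n, (-p - α i)) =
      fun p => ∑ m ∈ Finset.range (n + 1), (-1 : ℝ) ^ m * S m * p ^ m := by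
    funext p
    rw [hS (-p)]
    exact Finset.sum_congr rfl fun m _ => by rw [neg_pow]; ring
  rw [expand, cubeInt_sum_mul_pow]

/-- Multiparameter Stirling numbers of the first kind `S m` defined by
`Π_{i<n} (t − α i) = Σ_{m≤n} S m * t^m`; then
`ĉ_{n,A}^{(k)} = ∫_{[0,1]^k} Π_{i<n}(−p − α i) = Σ_{m≤n} (−1)^m S m/(m+1)^k`. -/
theorem stmt_16 (k : ℕ) (hk : 0 < k) (n : ℕ) (α : ℕ → ℝ) (S : ℕ → ℝ)
    (hS : ∀ t : ℝ,
      ∏ i ∈ Finset.range n, (t - α i) = ∑ m ∈ Finset.range (n + 1), S m * t ^ m) :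
    cubeInt k (fun p => ∏ i ∈ Finset.range n, (-p - α i)) =
      ∑ m ∈ Finset.range (n + 1), (-1 : ℝ) ^ m * S m / ((m : ℝ) + 1) ^ k :=
  stmt_16_general k n α S hS
end
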